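/- arXiv:1701.04227 — 2 statements merged into one kernel-verified Lean document; each statement's English description precedes it below -/
import Mathlib

section
/- Any k-special sequence on n symbols with n < 2k has length at most n, and consequently all its entries are pairwise distinct. -/
/-- `i 1, …, i (2r)` (1-indexed) is a `k`-bad index sequence for the 1-indexed sequence `S`,
with turning index `m`: the symbols form a repetition, the indices strictly decrease up to
position `m` and then strictly increase, consecutive indices differ by at most `k`, and the
gap at the turn is strictly less than `k` when the turn is internal. -/
def KBadIdx {α : Type*} (k : ℕ) (S : ℕ → α) (r m : ℕ) (i : ℕ → ℕ) : Prop :=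
  1 ≤ r ∧ 1 < m ∧ m ≤ 2 * r ∧
  (∀ j, 1 ≤ j → j ≤ r → S (i j) = S (i (j + r))) ∧
  (∀ j, 1 ≤ j → j < m → i (j + 1) < i j) ∧
  (∀ j, m ≤ j → j < 2 * r → i j < i (j + 1)) ∧
  (∀ j, 1 ≤ j → j < 2 * r → i (j + 1) ≤ i j + k ∧ i j ≤ i (j + 1) + k) ∧
  (m < 2 * r → i (m + 1) < i m + k)

/-- A finite sequence `S` (1-indexed, of length `n`) is `k`-special if it admits no
`k`-bad index sequence with all indices in `{1, …, n}`. -/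
def KSpecialFin {α : Type*} (k : ℕ) (S : ℕ → α) (n : ℕ) : Prop :=
  ¬ ∃ r m i, KBadIdx k S r m i ∧ ∀ j, 1 ≤ j → j ≤ 2 * r → 1 ≤ i j ∧ i j ≤ n

/-- An infinite sequence `S` (1-indexed) is `k`-special if it admits no `k`-bad index
sequence. -/
def KSpecialInf {α : Type*} (k : ℕ) (S : ℕ → α) : Prop :=
  ¬ ∃ r m i, KBadIdx k S r m i ∧ ∀ j, 1 ≤ j → j ≤ 2 * r → 1 ≤ i j

/-- The sequence `S_{n,c} = 1, 2, …, n, 1, 2, …, c` (1-indexed; entry at position `i` is `i`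
for `i ≤ n` and `i - n` for `i > n`). -/
def Snc (n : ℕ) (c : ℕ) : ℕ → ℕ := fun i => if i ≤ n then i else i - n


/-
Equal symbols at positions `p < q` with `q - p < 2k` already form a bad index sequence of length
two or four: the word `q, p` when `q - p ≤ k`, and otherwise `q, t, p, t` with a turning point
`t` strictly between them that is within `k` of `q` and closer than `k` to `p`. Hence a `k`-special
sequence is injective on every window of length at most `2k`, and when `n < 2k` symbols are
available the window `1, …, n + 1` cannot fit in the sequence.
-/

section BadIndexSequences

variable {α : Type*} {k : ℕ} {S : ℕ → α}

theorem kBadIdx_pair {p q : ℕ} (hpq : p < q) (hqp : q ≤ p + k) (h : S p = S q) :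
    KBadIdx k S 1 2 (fun j => if j = 1 then q else p) := by
  refine ⟨le_rfl, one_lt_two, le_rfl, fun j _ _ => ?_, fun j _ _ => ?_, fun j _ _ => by omega,
    fun j _ _ => ?_, by omega⟩
  all_goals obtain rfl : j = 1 := by omega
  exacts [by simp [h], by simpa, by simp; omega]

theorem kBadIdx_turn {p t q : ℕ} (hpt : p < t) (htq : t < q) (htp : t < p + k)
    (hqt : q ≤ t + k) (h : S p = S q) :
    KBadIdx k S 2 3 (fun j => if j = 1 then q else if j = 3 then p else t) := by
  refine ⟨one_le_two, by norm_num, by norm_num, fun j _ _ => ?_, fun j _ _ => ?_,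
    fun j _ _ => ?_, fun j _ _ => ?_, fun _ => by simp; omega⟩
  all_goals interval_cases j <;> simp [h] <;> omega

end BadIndexSequences

namespace KSpecialFin

variable {α : Type*} {k L : ℕ} {S : ℕ → α}

theorem apply_ne (hS : KSpecialFin k S L) {p q : ℕ} (hp : 1 ≤ p) (hpq : p < q) (hq : q ≤ L)
    (hqp : q < p + 2 * k) : S p ≠ S q := by
  intro h
  by_cases hclose : q ≤ p + k
  · exact hS ⟨1, 2, _, kBadIdx_pair hpq hclose h, fun j _ _ => by split_ifs <;> omega⟩
  · set t := max (p + 1) (q - k)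
    have hpt : p < t := by omega
    have htq : t < q := by omega
    exact hS ⟨2, 3, _, kBadIdx_turn hpt htq (by omega) (by omega) h,
      fun j _ _ => by split_ifs <;> omega⟩

theorem injOn_Icc (hS : KSpecialFin k S L) {m : ℕ} (hmL : m ≤ L) (hmk : m ≤ 2 * k) :
    Set.InjOn S (Set.Icc 1 m) := by
  intro p ⟨hp, hpm⟩ q ⟨hq, hqm⟩ h
  by_contra hne
  rcases Nat.lt_or_gt_of_ne hne with hpq | hqp
  · exact hS.apply_ne hp hpq (by omega) (by omega) h
  · exact hS.apply_ne hq hqp (by omega) (by omega) h.symm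

theorem length_le_of_card_image_le [DecidableEq α] {n : ℕ} (hS : KSpecialFin k S L)
    (hn : n < 2 * k) (hsym : ((Finset.Icc 1 L).image S).card ≤ n) : L ≤ n := by
  by_contra! hLn
  have hinj : Set.InjOn S (Finset.Icc 1 (n + 1)) := by
    rw [Finset.coe_Icc]; exact hS.injOn_Icc hLn hn
  have hsub : (Finset.Icc 1 (n + 1)).image S ⊆ (Finset.Icc 1 L).image S :=
    Finset.image_subset_image (Finset.Icc_subset_Icc le_rfl hLn)
  have hcard := Finset.card_le_card hsub
  rw [Finset.card_image_of_injOn hinj, Nat.card_Icc] at hcard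
  omega

end KSpecialFin

theorem stmt7_general (k n L : ℕ) (hn : n < 2 * k) (S : ℕ → ℕ)
    (hspec : KSpecialFin k S L)
    (hsym : ((Finset.Icc 1 L).image S).card ≤ n) :
    L ≤ n ∧ ∀ p q : ℕ, 1 ≤ p → p < q → q ≤ L → S p ≠ S q := by
  have hL : L ≤ n := hspec.length_le_of_card_image_le hn hsym
  exact ⟨hL, fun p q hp hpq hq => hspec.apply_ne hp hpq hq (by omega)⟩

/-- A `k`-special sequence on `n` symbols with `n < 2k` has length at most `n`, and all
its entries are pairwise distinct. -/
theorem stmt7 (k n L : ℕ) (hk : 1 ≤ k) (hn : n < 2 * k) (S : ℕ → ℕ)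
    (hspec : KSpecialFin k S L)
    (hsym : ((Finset.Icc 1 L).image S).card ≤ n) :
    L ≤ n ∧ ∀ p q : ℕ, 1 ≤ p → p < q → q ≤ L → S p ≠ S q :=
  stmt7_general k n L hn S hspec hsym
end

section
/- If n = 2k, then every k-bad index sequence for S_{2k,k} = 1,...,2k,1,...,k has turning index m = 2 and half-length r > 2 (in particular r ≥ 3). -/
lemma eq_or_eq_add_of_snc_eq {n c p q : ℕ} (h : Snc n c p = Snc n c q) :
    p = q ∨ p = q + n ∨ q = p + n := by
  unfold Snc at h
  split_ifs at h <;> omega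

namespace KBadIdx

variable {α : Type*} {k r m j : ℕ} {S : ℕ → α} {i : ℕ → ℕ}

lemma strictAntiOn (h : KBadIdx k S r m i) : StrictAntiOn i (Set.Icc 1 m) :=
  strictAntiOn_of_add_one_lt Set.ordConnected_Icc fun a _ ha ha' => h.2.2.2.2.1 a ha.1 ha'.2

lemma strictMonoOn (h : KBadIdx k S r m i) : StrictMonoOn i (Set.Icc m (2 * r)) :=
  strictMonoOn_of_lt_add_one Set.ordConnected_Icc fun a _ ha ha' => h.2.2.2.2.2.1 a ha.1 ha'.2

lemma one_le_half (h : KBadIdx k S r m i) : 1 ≤ r := h.1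

lemma one_lt_turn (h : KBadIdx k S r m i) : 1 < m := h.2.1

lemma turn_le_two_mul (h : KBadIdx k S r m i) : m ≤ 2 * r := h.2.2.1

lemma apply_eq_apply_add (h : KBadIdx k S r m i) (hj : 1 ≤ j) (hjr : j ≤ r) :
    S (i j) = S (i (j + r)) :=
  h.2.2.2.1 j hj hjr

lemma apply_succ_le_add (h : KBadIdx k S r m i) (hj : 1 ≤ j) (hjr : j < 2 * r) :
    i (j + 1) ≤ i j + k :=
  (h.2.2.2.2.2.2.1 j hj hjr).1

lemma apply_le_apply_succ_add (h : KBadIdx k S r m i) (hj : 1 ≤ j) (hjr : j < 2 * r) :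
    i j ≤ i (j + 1) + k :=
  (h.2.2.2.2.2.2.1 j hj hjr).2

lemma apply_turn_succ_lt_add (h : KBadIdx k S r m i) (hm : m < 2 * r) : i (m + 1) < i m + k :=
  h.2.2.2.2.2.2.2 hm

lemma apply_add_eq_add_of_turn_le (h : KBadIdx k (Snc (2 * k) k) r m i) (hmj : m ≤ j)
    (hjr : j ≤ r) : i (j + r) = i j + 2 * k := by
  have hlt : i j < i (j + r) :=
    h.strictMonoOn ⟨hmj, by omega⟩ ⟨by omega, by omega⟩ (by have := h.one_le_half; omega)
  rcases eq_or_eq_add_of_snc_eq (h.apply_eq_apply_add (by have := h.one_lt_turn; omega) hjr)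
    with heq | heq | heq <;> omega

lemma apply_eq_apply_add_add_of_le_turn (h : KBadIdx k (Snc (2 * k) k) r m i) (hj : 1 ≤ j)
    (hjm : j + r ≤ m) : i j = i (j + r) + 2 * k := by
  have hlt : i (j + r) < i j :=
    h.strictAntiOn ⟨hj, by omega⟩ ⟨by omega, hjm⟩ (by have := h.one_le_half; omega)
  rcases eq_or_eq_add_of_snc_eq (h.apply_eq_apply_add hj (by have := h.turn_le_two_mul; omega))
    with heq | heq | heq <;> omega

lemma turn_lt_two_mul (h : KBadIdx k (Snc (2 * k) k) r m i) (h1 : i 1 ≤ 3 * k)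
    (h2r : 1 ≤ i (2 * r)) : m < 2 * r := by
  have hr := h.one_le_half
  by_contra! hle
  have hm : m = 2 * r := le_antisymm h.turn_le_two_mul hle
  have hfirst : i 1 = i (r + 1) + 2 * k := by
    simpa only [add_comm 1 r] using h.apply_eq_apply_add_add_of_le_turn le_rfl (by omega)
  have hlast : i r = i (2 * r) + 2 * k := by
    simpa only [two_mul] using h.apply_eq_apply_add_add_of_le_turn (j := r) hr (by omega)
  have hstep := h.apply_le_apply_succ_add hr (by omega)
  omega

lemma turn_le_half (h : KBadIdx k (Snc (2 * k) k) r m i) (hm : m < 2 * r) : m ≤ r := by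
  by_contra! hrm
  obtain ⟨b, rfl⟩ : ∃ b, m = b + r := ⟨m - r, by omega⟩
  have hb : i b = i (b + r) + 2 * k := h.apply_eq_apply_add_add_of_le_turn (by omega) le_rfl
  have hdec : i (b + 1) < i b :=
    h.strictAntiOn ⟨by omega, by omega⟩ ⟨by omega, by omega⟩ (by omega)
  have hstep := h.apply_le_apply_succ_add (j := b) (by omega) (by omega)
  have hinc : i (b + r) < i (b + r + 1) :=
    h.strictMonoOn ⟨le_rfl, by omega⟩ ⟨by omega, by omega⟩ (by omega)
  have hgap := h.apply_turn_succ_lt_add hm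
  have hrep := h.apply_eq_apply_add (j := b + 1) (by omega) (by omega)
  rw [add_right_comm] at hrep
  rcases eq_or_eq_add_of_snc_eq hrep with heq | heq | heq <;> omega

lemma two_lt_half (h : KBadIdx k (Snc (2 * k) k) r m i) (hm : m ≤ r) : 2 < r := by
  have hm1 := h.one_lt_turn
  by_contra! hr
  obtain rfl : r = 2 := by omega
  obtain rfl : m = 2 := by omega
  have hpair : i 4 = i 2 + 2 * k := h.apply_add_eq_add_of_turn_le le_rfl le_rfl
  have hgap : i 3 < i 2 + k := h.apply_turn_succ_lt_add (by norm_num)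
  have hstep : i 4 ≤ i 3 + k := h.apply_succ_le_add (j := 3) (by norm_num) (by norm_num)
  omega

lemma turn_eq_two (h : KBadIdx k (Snc (2 * k) k) r m i) (hm : m ≤ r) : m = 2 := by
  have hr := h.two_lt_half hm
  have hm1 := h.one_lt_turn
  by_contra! hm2
  obtain ⟨a, rfl⟩ : ∃ a, m = a + 2 := ⟨m - 2, by omega⟩
  have hpair : i (a + 2 + r) = i (a + 2) + 2 * k := h.apply_add_eq_add_of_turn_le le_rfl hm
  have hdec₁ : i (a + 2) < i (a + 1) :=
    h.strictAntiOn ⟨by omega, by omega⟩ ⟨by omega, le_rfl⟩ (by omega)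
  have hdec₀ : i (a + 1) < i a :=
    h.strictAntiOn ⟨by omega, by omega⟩ ⟨by omega, by omega⟩ (by omega)
  have hstep₁ : i (a + 1) ≤ i (a + 2) + k := h.apply_le_apply_succ_add (by omega) (by omega)
  have hstep₀ := h.apply_le_apply_succ_add (j := a) (by omega) (by omega)
  have hinc₀ : i (a + 2) < i (a + r) :=
    h.strictMonoOn ⟨le_rfl, by omega⟩ ⟨by omega, by omega⟩ (by omega)
  have hinc₁ : i (a + r) < i (a + 1 + r) :=
    h.strictMonoOn ⟨by omega, by omega⟩ ⟨by omega, by omega⟩ (by omega)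
  have hinc₂ : i (a + 1 + r) < i (a + 2 + r) :=
    h.strictMonoOn ⟨by omega, by omega⟩ ⟨by omega, by omega⟩ (by omega)
  have hstep₂ : i (a + 2 + r) ≤ i (a + 1 + r) + k := by
    simpa only [show a + 1 + r + 1 = a + 2 + r by omega]
      using h.apply_succ_le_add (j := a + 1 + r) (by omega) (by omega)
  have hmid : i (a + 1) = i (a + 1 + r) := by
    rcases eq_or_eq_add_of_snc_eq (h.apply_eq_apply_add (j := a + 1) (by omega) (by omega))
      with heq | heq | heq <;> omega
  rcases eq_or_eq_add_of_snc_eq (h.apply_eq_apply_add (j := a) (by omega) (by omega))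
    with heq | heq | heq <;> omega

end KBadIdx

theorem stmt11_general (k : ℕ) :
    ∀ (r m : ℕ) (i : ℕ → ℕ), KBadIdx k (Snc (2 * k) k) r m i →
      (∀ j, 1 ≤ j → j ≤ 2 * r → 1 ≤ i j ∧ i j ≤ 3 * k) → m = 2 ∧ 2 < r := by
  intro r m i h hbnd
  have hr := h.one_le_half
  have hm : m ≤ r := h.turn_le_half <|
    h.turn_lt_two_mul (hbnd 1 le_rfl (by omega)).2 (hbnd (2 * r) (by omega) le_rfl).1
  exact ⟨h.turn_eq_two hm, h.two_lt_half hm⟩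

/-- For `n = 2k`, every `k`-bad index sequence for `S_{2k,k} = 1, …, 2k, 1, …, k` (of
length `3k`) has turning index `m = 2` and half-length `r > 2`. -/
theorem stmt11 (k : ℕ) (hk : 1 ≤ k) :
    ∀ (r m : ℕ) (i : ℕ → ℕ), KBadIdx k (Snc (2 * k) k) r m i →
      (∀ j, 1 ≤ j → j ≤ 2 * r → 1 ≤ i j ∧ i j ≤ 3 * k) → m = 2 ∧ 2 < r :=
  stmt11_general k
end
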